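/- Define the q-Stirling subset number {n brace k}_q to be the number of unordered direct sum decompositions of F_q^n into k nonzero subspaces. Then {n brace k}_q = (1/k!) · Σ γ_n / (γ_{n_1} ⋯ γ_{n_k}), the sum over all ordered k-tuples (n_1, ..., n_k) of positive integers with n_1 + ⋯ + n_k = n, where γ_m = |GL_m(F_q)|. -/

import Mathlib

/-- The order of `GL_m(F_q)`. -/
def gma (q m : ℕ) : ℕ := ∏ i ∈ Finset.range m, (q ^ m - q ^ i)

/-- The `q`-Stirling subset number `{n brace k}_q`: the number of unordered direct sum
decompositions of `F_q^n` into `k` nonzero subspaces. -/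
noncomputable def qStirling (n k : ℕ) (F : Type) [Field F] [Fintype F] : ℕ :=
  Nat.card {D : Finset (Submodule F (Fin n → F)) //
    D.card = k ∧ (∀ V ∈ D, V ≠ ⊥) ∧
    sSupIndep (D : Set (Submodule F (Fin n → F))) ∧
    sSup (D : Set (Submodule F (Fin n → F))) = ⊤}

/-!
An ordered decomposition `F_q^n = V_1 ⊕ ⋯ ⊕ V_k` with `dim V_i = n_i`, together with a basis of
each `V_i`, is the same thing as a basis of `F_q^n` indexed by `Σ i, Fin n_i`: concatenate the
bases, and conversely cut a basis into blocks. A space of dimension `m` has `γ_m` bases, so there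
are `γ_n / ∏ γ_{n_i}` such decompositions. Summing over dimension vectors counts the ordered
decompositions into nonzero subspaces, and each unordered one arises from exactly `k!` orderings.
-/

open Module

theorem Nat.card_eq_sum_card_fiber {α β : Type*} [Finite α] [Fintype β] (f : α → β) :
    Nat.card α = ∑ b, Nat.card {a // f a = b} := by
  rw [Nat.card_congr (Equiv.sigmaFiberEquiv f).symm, Nat.card_sigma]

theorem Nat.card_eq_mul_of_card_fiber {α β : Type*} [Finite α] [Finite β] (f : α → β) {m : ℕ}
    (hf : ∀ b, Nat.card {a // f a = b} = m) : Nat.card α = Nat.card β * m := by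
  have := Fintype.ofFinite β
  simp [Nat.card_eq_sum_card_fiber f, hf, Nat.card_eq_fintype_card]

section embedding

open Finset

variable {ι α : Type*} [Fintype ι]

noncomputable def embeddingMapUnivEqEquiv (D : Finset α) :
    {f : ι ↪ α // univ.map f = D} ≃ (ι ≃ D) where
  toFun f := .ofBijective
    (fun i => ⟨f.1 i, (Finset.ext_iff.1 f.2 _).1 (mem_map_of_mem _ (mem_univ i))⟩)
    ⟨fun i j h => f.1.injective (congr_arg Subtype.val h), fun x => by
      obtain ⟨i, -, hi⟩ := mem_map.1 ((Finset.ext_iff.1 f.2 _).2 x.2)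
      exact ⟨i, Subtype.ext hi⟩⟩
  invFun e := ⟨e.toEmbedding.trans (.subtype _), by
    ext a
    simpa using ⟨fun ⟨i, h⟩ => h ▸ (e i).2, fun h => ⟨e.symm ⟨a, h⟩, by simp⟩⟩⟩
  left_inv _ := rfl
  right_inv _ := Equiv.ext fun _ => rfl

theorem card_embedding_map_univ_eq (D : Finset α) (hD : #D = Fintype.card ι) :
    Nat.card {f : ι ↪ α // univ.map f = D} = (Fintype.card ι).factorial := by
  classical
  rw [Nat.card_congr (embeddingMapUnivEqEquiv D), Nat.card_eq_fintype_card,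
    Fintype.card_equiv (Fintype.equivOfCardEq (by simp [hD]))]

theorem card_embedding_map_univ [Finite α] (P : Finset α → Prop) :
    Nat.card {f : ι ↪ α // P (univ.map f)} =
      Nat.card {D : Finset α // #D = Fintype.card ι ∧ P D} * (Fintype.card ι).factorial :=
  Nat.card_eq_mul_of_card_fiber (fun f : {f : ι ↪ α // P (univ.map f)} =>
    (⟨univ.map f.1, by simp, f.2⟩ : {D : Finset α // #D = Fintype.card ι ∧ P D})) fun D =>
    (Nat.card_congr
      { toFun f := ⟨f.1.1, congr_arg Subtype.val f.2⟩
        invFun f := ⟨⟨f.1, (congr_arg P f.2).mpr D.2.2⟩, Subtype.ext f.2⟩ }).trans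
      (card_embedding_map_univ_eq D.1 D.2.1)

end embedding

theorem iSupIndep_of_sSupIndep_range {α ι : Type*} [CompleteLattice α] {t : ι → α}
    (ht : sSupIndep (Set.range t)) (hinj : Function.Injective t) : iSupIndep t :=
  ((sSupIndep_iff _).1 ht).comp (Set.rangeFactorization_injective.2 hinj)

open Finset in
theorem card_iSupIndep_ne_bot_eq_mul_factorial {α ι : Type*} [CompleteLattice α] [Finite α]
    [Fintype ι] :
    Nat.card {V : ι → α // (∀ i, V i ≠ ⊥) ∧ iSupIndep V ∧ ⨆ i, V i = ⊤} =
      Nat.card {D : Finset α // #D = Fintype.card ι ∧ (∀ a ∈ D, a ≠ ⊥) ∧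
        sSupIndep (D : Set α) ∧ sSup (D : Set α) = ⊤} * (Fintype.card ι).factorial := by
  rw [← card_embedding_map_univ]
  refine Nat.card_congr
    { toFun V := ⟨⟨V.1, V.2.2.1.injective V.2.1⟩, ?_⟩
      invFun f := ⟨f.1, ?_⟩ }
  · simpa [sSup_range] using ⟨V.2.1, V.2.2.1.sSupIndep_range, V.2.2.2⟩
  · obtain ⟨hbot, hindep, htop⟩ := f.2
    simp only [coe_map, coe_univ, Set.image_univ, mem_map, mem_univ, true_and] at hbot hindep htop
    exact ⟨fun i => hbot _ ⟨i, rfl⟩, iSupIndep_of_sSupIndep_range hindep f.1.injective,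
      by rwa [← sSup_range]⟩

theorem gma_pos {q : ℕ} (hq : 1 < q) (m : ℕ) : 0 < gma q m :=
  Finset.prod_pos fun _ hi => Nat.sub_pos_of_lt (Nat.pow_lt_pow_right hq (Finset.mem_range.1 hi))

instance Module.Basis.finite {R M ι : Type*} [Semiring R] [AddCommMonoid M] [Module R M]
    [Finite ι] [Finite M] : Finite (Basis ι R M) :=
  .of_injective _ DFunLike.coe_injective

section card_basis

variable {F M : Type*} [Field F] [AddCommGroup M] [Module F M] {ι : Type*} [Fintype ι]

noncomputable def Module.Basis.equivLinearIndependent [FiniteDimensional F M]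
    (h : Fintype.card ι = finrank F M) :
    Basis ι F M ≃ {v : ι → M // LinearIndependent F v} where
  toFun b := ⟨b, b.linearIndependent⟩
  invFun v := basisOfLinearIndependentOfCardEqFinrank' v.1 v.2 h
  left_inv b := Basis.eq_of_apply_eq fun _ => by simp
  right_inv v := by simp

theorem Module.Basis.card_eq_gma [Fintype F] [Finite M] (h : Fintype.card ι = finrank F M) :
    Nat.card (Basis ι F M) = gma (Fintype.card F) (Fintype.card ι) := by
  let e : {v : ι → M // LinearIndependent F v} ≃
      {v : Fin (Fintype.card ι) → M // LinearIndependent F v} :=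
    (Equiv.arrowCongr (Fintype.equivFin ι) (Equiv.refl M)).subtypeEquiv fun v => by
      simp [Equiv.arrowCongr, ← linearIndependent_equiv (Fintype.equivFin ι).symm]
  rw [Nat.card_congr ((Basis.equivLinearIndependent h).trans e), card_linearIndependent h.le, gma,
    ← h, Fin.prod_univ_eq_prod_range fun i => Fintype.card F ^ Fintype.card ι - Fintype.card F ^ i]

end card_basis

section decomposition

open Submodule Set

variable {F M : Type*} [Field F] [AddCommGroup M] [Module F M] {ι : Type*}

theorem Submodule.span_range_coe_basis (p : Submodule F M) {κ : Type*} (b : Basis κ F p) :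
    span F (range fun j => (b j : M)) = p := by
  conv_rhs => rw [← p.range_subtype, ← map_top, ← b.span_eq, map_span, ← range_comp]
  rfl

theorem DirectSum.IsInternal.span_collectedBasis_sigmaMk [DecidableEq ι] {V : ι → Submodule F M}
    (h : DirectSum.IsInternal V) {κ : ι → Type*} (b : ∀ i, Basis (κ i) F (V i)) (i : ι) :
    span F (range fun j => h.collectedBasis b ⟨i, j⟩) = V i := by
  simp only [h.collectedBasis_coe]
  exact span_range_coe_basis (V i) (b i)

variable {κ : ι → Type*} (b : Basis (Σ i, κ i) F M)

theorem Module.Basis.iSupIndep_span_sigmaMk :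
    iSupIndep fun i => span F (range fun j => b ⟨i, j⟩) := by
  intro i
  refine (b.linearIndependent.disjoint_span_image (s := {a | a.1 = i}) (t := {a | a.1 ≠ i})
    (disjoint_left.2 fun _ h h' => h' h)).mono ?_ ?_
  · exact span_mono (by rintro _ ⟨j, rfl⟩; exact ⟨⟨i, j⟩, rfl, rfl⟩)
  · refine iSup₂_le fun i' hi' => span_le.2 ?_
    rintro _ ⟨j, rfl⟩
    exact subset_span ⟨⟨i', j⟩, hi', rfl⟩

theorem Module.Basis.iSup_span_sigmaMk : ⨆ i, span F (range fun j => b ⟨i, j⟩) = ⊤ := by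
  rw [eq_top_iff, ← b.span_eq, span_le]
  rintro _ ⟨a, rfl⟩
  exact mem_iSup_of_mem a.1 (subset_span ⟨a.2, rfl⟩)

theorem DirectSum.IsInternal.sum_finrank [FiniteDimensional F M] [Fintype ι] [DecidableEq ι]
    {V : ι → Submodule F M} (h : DirectSum.IsInternal V) :
    ∑ i, finrank F (V i) = finrank F M := by
  simpa using (finrank_eq_card_basis (h.collectedBasis fun i => finBasis F (V i))).symm

variable (F M) in
abbrev FinrankDecomposition (c : ι → ℕ) : Type _ :=
  {V : ι → Submodule F M // iSupIndep V ∧ ⨆ i, V i = ⊤ ∧ ∀ i, finrank F (V i) = c i}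

theorem FinrankDecomposition.isInternal [DecidableEq ι] {c : ι → ℕ}
    (V : FinrankDecomposition F M c) : DirectSum.IsInternal V.1 :=
  (DirectSum.isInternal_submodule_iff_iSupIndep_and_iSup_eq_top _).2 ⟨V.2.1, V.2.2.1⟩

theorem bijective_collectedBasis [DecidableEq ι] (c : ι → ℕ) :
    Function.Bijective
      fun p : Σ V : FinrankDecomposition F M c, ∀ i, Basis (Fin (c i)) F (V.1 i) =>
        p.1.isInternal.collectedBasis p.2 := by
  constructor
  · rintro ⟨V, bV⟩ ⟨W, bW⟩ h
    dsimp only at h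
    obtain rfl : V = W := Subtype.ext <| funext fun i => by
      rw [← V.isInternal.span_collectedBasis_sigmaMk bV i,
        ← W.isInternal.span_collectedBasis_sigmaMk bW i, h]
    obtain rfl : bV = bW := funext fun i => Basis.eq_of_apply_eq fun j => Subtype.ext <| by
      simpa only [DirectSum.IsInternal.collectedBasis_coe] using congr_fun (congr_arg (⇑) h) ⟨i, j⟩
    rfl
  · intro b
    have li (i : ι) : LinearIndependent F fun j => b ⟨i, j⟩ :=
      b.linearIndependent.comp _ sigma_mk_injective
    refine ⟨⟨⟨_, b.iSupIndep_span_sigmaMk, b.iSup_span_sigmaMk,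
      fun i => by simp [finrank_span_eq_card (li i)]⟩, fun i => Basis.span (li i)⟩,
      Basis.eq_of_apply_eq fun a => ?_⟩
    simp [DirectSum.IsInternal.collectedBasis_coe, Basis.span_apply]

theorem card_finrankDecomposition_mul_prod_gma [Fintype F] [Finite M] [Fintype ι] (c : ι → ℕ)
    (hc : ∑ i, c i = finrank F M) :
    Nat.card (FinrankDecomposition F M c) * ∏ i, gma (Fintype.card F) (c i) =
      gma (Fintype.card F) (finrank F M) := by
  classical
  have := Fintype.ofFinite (FinrankDecomposition F M c)
  have card_bases (V : FinrankDecomposition F M c) :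
      Nat.card (∀ i, Basis (Fin (c i)) F (V.1 i)) = ∏ i, gma (Fintype.card F) (c i) := by
    rw [Nat.card_pi]
    exact Finset.prod_congr rfl fun i _ => by rw [Basis.card_eq_gma] <;> simp [V.2.2.2 i]
  calc _ = Nat.card (Σ V : FinrankDecomposition F M c, ∀ i, Basis (Fin (c i)) F (V.1 i)) := by
        simp [Nat.card_sigma, card_bases, Nat.card_eq_fintype_card]
    _ = Nat.card (Basis (Σ i, Fin (c i)) F M) :=
        Nat.card_eq_of_bijective _ (bijective_collectedBasis c)
    _ = _ := by rw [Basis.card_eq_gma] <;> simp [hc]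

end decomposition

theorem card_iSupIndep_ne_bot_eq_sum_div {F M : Type*} [Field F] [Fintype F] [AddCommGroup M]
    [Module F M] [Finite M] {n : ℕ} (hn : finrank F M = n) (k : ℕ) :
    (Nat.card {V : Fin k → Submodule F M // (∀ i, V i ≠ ⊥) ∧ iSupIndep V ∧ ⨆ i, V i = ⊤} : ℚ) =
      ∑ c ∈ (Finset.Nat.antidiagonalTuple k n).filter (fun c => ∀ i, 0 < c i),
        (gma (Fintype.card F) n : ℚ) / ∏ i, (gma (Fintype.card F) (c i) : ℚ) := by
  classical
  set s := (Finset.Nat.antidiagonalTuple k n).filter (fun c => ∀ i, 0 < c i)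
  have finrank_mem
      (V : {V : Fin k → Submodule F M // (∀ i, V i ≠ ⊥) ∧ iSupIndep V ∧ ⨆ i, V i = ⊤}) :
      (fun i => finrank F (V.1 i)) ∈ s := by
    refine Finset.mem_filter.2 ⟨Finset.Nat.mem_antidiagonalTuple.2 ?_, fun i => ?_⟩
    · rw [← hn]
      exact ((DirectSum.isInternal_submodule_iff_iSupIndep_and_iSup_eq_top _).2 V.2.2).sum_finrank
    · exact Nat.pos_of_ne_zero (by rw [Ne, Submodule.finrank_eq_zero]; exact V.2.1 i)
  rw [Nat.card_eq_sum_card_fiber fun V => (⟨_, finrank_mem V⟩ : s), Nat.cast_sum,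
    ← Finset.sum_coe_sort s]
  refine Finset.sum_congr rfl fun ⟨c, hc⟩ _ => ?_
  have fiber_equiv : {V // (⟨_, finrank_mem V⟩ : s) = ⟨c, hc⟩} ≃ FinrankDecomposition F M c :=
    { toFun V := ⟨V.1.1, V.1.2.2.1, V.1.2.2.2, fun i => congr_fun (congr_arg Subtype.val V.2) i⟩
      invFun V := ⟨⟨V.1, fun i hi =>
          ((Finset.mem_filter.1 hc).2 i).ne' (by rw [← V.2.2.2 i, hi, finrank_bot]),
          V.2.1, V.2.2.1⟩,
        Subtype.ext (funext V.2.2.2)⟩ }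
  have hc_sum : ∑ i, c i = finrank F M :=
    hn ▸ Finset.Nat.mem_antidiagonalTuple.1 (Finset.mem_filter.1 hc).1
  rw [Nat.card_congr fiber_equiv, eq_div_iff (Finset.prod_ne_zero_iff.2 fun i _ =>
      Nat.cast_ne_zero.2 (gma_pos Fintype.one_lt_card _).ne'),
    ← hn, ← card_finrankDecomposition_mul_prod_gma c hc_sum]
  push_cast
  rfl

theorem qStirling_eq_general (q n k : ℕ)
    (F : Type) [Field F] [Fintype F] (hF : Fintype.card F = q) :
    (qStirling n k F : ℚ) =
      (1 / k.factorial) *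
        ∑ c ∈ (Finset.Nat.antidiagonalTuple k n).filter (fun c => ∀ i, 0 < c i),
          (gma q n : ℚ) / ∏ i, (gma q (c i) : ℚ) := by
  subst hF
  have ordered := card_iSupIndep_ne_bot_eq_sum_div (F := F) (finrank_fin_fun F (n := n)) k
  have orderings :=
    card_iSupIndep_ne_bot_eq_mul_factorial (α := Submodule F (Fin n → F)) (ι := Fin k)
  rw [Fintype.card_fin] at orderings
  rw [← ordered, orderings, qStirling]
  push_cast
  field_simp

/-- `{n brace k}_q = (1/k!) Σ γ_n / (γ_{n_1} ⋯ γ_{n_k})`, the sum over ordered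
`k`-tuples of positive integers summing to `n`. -/
theorem qStirling_eq (q n k : ℕ) (hk : 1 ≤ k) (hn : k ≤ n)
    (F : Type) [Field F] [Fintype F] (hF : Fintype.card F = q) :
    (qStirling n k F : ℚ) =
      (1 / k.factorial) *
        ∑ c ∈ (Finset.Nat.antidiagonalTuple k n).filter (fun c => ∀ i, 0 < c i),
          (gma q n : ℚ) / ∏ i, (gma q (c i) : ℚ) :=
  qStirling_eq_general q n k F hF
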